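/- Let τ₁ ≥ τ₂ ≥ τ₃ ≥ τ₄ be real numbers with τ₄ = −τ₁−τ₂−τ₃, and let ρ, ξ₁, ξ₂, ξ₃ be arbitrary reals. Then the quantity E := −6τ₁ − 4τ₂ − 2τ₃ + |ρ−τ₄| + |ρ−τ₃| + |ξ₁+τ₁| + |ξ₁+τ₂| + |ξ₁+ρ| + |ξ₂+τ₁+τ₂| + |ξ₂+τ₁+ρ| + |ξ₂+τ₂+ρ| + |ξ₂+τ₃+τ₄| + |ξ₃+τ₁+τ₂+ρ| + |ξ₃+τ₁+τ₃+τ₄| + |ξ₃+τ₂+τ₃+τ₄| − |ξ₁+ξ₂+τ₁+τ₂+ρ| − |ρ+ξ₂+ξ₃| is nonnegative. -/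
import Mathlib

theorem statement4 (τ₁ τ₂ τ₃ τ₄ ρ ξ₁ ξ₂ ξ₃ : ℝ)
    (h12 : τ₂ ≤ τ₁) (h23 : τ₃ ≤ τ₂) (h34 : τ₄ ≤ τ₃) (hsum : τ₄ = -τ₁ - τ₂ - τ₃) :
    0 ≤ -6*τ₁ - 4*τ₂ - 2*τ₃
        + |ρ - τ₄| + |ρ - τ₃|
        + |ξ₁ + τ₁| + |ξ₁ + τ₂| + |ξ₁ + ρ|
        + |ξ₂ + τ₁ + τ₂| + |ξ₂ + τ₁ + ρ| + |ξ₂ + τ₂ + ρ| + |ξ₂ + τ₃ + τ₄|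
        + |ξ₃ + τ₁ + τ₂ + ρ| + |ξ₃ + τ₁ + τ₃ + τ₄| + |ξ₃ + τ₂ + τ₃ + τ₄|
        - |ξ₁ + ξ₂ + τ₁ + τ₂ + ρ| - |ρ + ξ₂ + ξ₃| := by
  have h1 : |ξ₁ + ξ₂ + τ₁ + τ₂ + ρ| ≤ |ξ₁ + τ₂| + |ξ₂ + τ₁ + ρ| := by
    have e : ξ₁ + ξ₂ + τ₁ + τ₂ + ρ = (ξ₁ + τ₂) + (ξ₂ + τ₁ + ρ) := by ring
    rw [e]; exact abs_add_le _ _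
  have h2 : |ρ + ξ₂ + ξ₃| ≤ |ξ₂ + τ₂ + ρ| + |ξ₃ + τ₁ + τ₃ + τ₄| := by
    have e : ρ + ξ₂ + ξ₃ = (ξ₂ + τ₂ + ρ) + (ξ₃ + τ₁ + τ₃ + τ₄) := by linarith
    rw [e]; exact abs_add_le _ _
  linarith [le_abs_self (ρ - τ₄), neg_abs_le (ρ - τ₃),
    le_abs_self (ξ₁ + τ₁), neg_abs_le (ξ₁ + ρ),
    le_abs_self (ξ₂ + τ₁ + τ₂), neg_abs_le (ξ₂ + τ₃ + τ₄),
    le_abs_self (ξ₃ + τ₁ + τ₂ + ρ), neg_abs_le (ξ₃ + τ₂ + τ₃ + τ₄)]
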